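/- Let u = (u_1,...,u_n) be a lace diagram for (e_0,...,e_n) and let (w_1,...,w_n) be any sequence of finitely supported permutations such that every descent of w_i is <= e_i and every descent of w_i^{-1} is <= e_{i-1}. If phi_u(S(w)) is nonzero, where S(w) = S_{w_1}(x^1;x^0) ... S_{w_n}(x^n;x^{n-1}), then w_i <= u_i in the Bruhat order for every i = 1,...,n. -/

import Mathlib

open MvPolynomial

/-! Common setup.  Dots in columns, positions in permutations, and variable
indices are all 0-indexed: dot `q` (0-indexed) of column `i` is dot `q+1`
(1-indexed) in the paper, the variable `(i, j) : ℕ × ℕ` is the Chern root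
`x^i_{j+1}`, and in the Schubert variable type `ℕ ⊕ ℕ`, `Sum.inl a` is
`x_{a+1}` and `Sum.inr b` is `y_{b+1}`. -/

/-- Coxeter length = number of inversions of a (finitely supported) permutation of ℕ. -/
noncomputable def ell (w : Equiv.Perm ℕ) : ℕ :=
  {p : ℕ × ℕ | p.1 < p.2 ∧ w p.2 < w p.1}.ncard

/-- A finitely supported permutation of ℕ. -/
def FinSupp (w : Equiv.Perm ℕ) : Prop := {x | w x ≠ x}.Finite

/-- A lace diagram for the dimension vector `e 0, …, e n`, encoded as a sequence
`w 1, …, w n` of finitely supported permutations of ℕ (normalized so that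
`w i = 1` outside `1 ≤ i ≤ n`): all descent positions of `w i` are `< e i` and
all descent positions of `(w i)⁻¹` are `< e (i-1)` (0-indexed positions). -/
def IsLace (n : ℕ) (e : ℕ → ℕ) (w : ℕ → Equiv.Perm ℕ) : Prop :=
  (∀ i, i = 0 ∨ n < i → w i = 1) ∧
  ∀ i, 1 ≤ i → i ≤ n → FinSupp (w i) ∧
    (∀ k, w i (k + 1) < w i k → k < e i) ∧
    (∀ k, (w i)⁻¹ (k + 1) < (w i)⁻¹ k → k < e (i - 1))

/-- `chain w i k p = (w k)⁻¹ (⋯ ((w (i+1))⁻¹ p))` for `k ≥ i`, and `p` for `k ≤ i`. -/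
def chain (w : ℕ → Equiv.Perm ℕ) (i : ℕ) : ℕ → ℕ → ℕ
  | 0, p => p
  | k + 1, p => if k + 1 ≤ i then p else (w (k + 1))⁻¹ (chain w i k p)

/-- The rank conditions of a lace diagram: `rank e w i j` is the number of dots
`p < e i` of column `i` whose strand continues through column `j`. -/
noncomputable def rank (e : ℕ → ℕ) (w : ℕ → Equiv.Perm ℕ) (i j : ℕ) : ℕ :=
  {p : ℕ | p < e i ∧ ∀ k, i < k → k ≤ j → chain w i k p < e k}.ncard

/-- The lace diagram `w` has rank conditions `r` (for `0 ≤ i ≤ j ≤ n`). -/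
def RankEq (n : ℕ) (e : ℕ → ℕ) (w : ℕ → Equiv.Perm ℕ) (r : ℕ → ℕ → ℕ) : Prop :=
  ∀ i j, i ≤ j → j ≤ n → rank e w i j = r i j

/-- The length of a lace diagram. -/
noncomputable def diagLength (n : ℕ) (w : ℕ → Equiv.Perm ℕ) : ℕ :=
  ∑ i ∈ Finset.Icc 1 n, ell (w i)

/-- The expected codimension `d(r)`. -/
def codim (n : ℕ) (r : ℕ → ℕ → ℕ) : ℕ :=
  ∑ i ∈ Finset.range (n + 1), ∑ j ∈ Finset.range (n + 1),
    if i < j then (r i (j - 1) - r i j) * (r (i + 1) j - r i j) else 0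

/-- A minimal lace diagram: its length equals the expected codimension of its
rank conditions. -/
def IsMinimal (n : ℕ) (e : ℕ → ℕ) (w : ℕ → Equiv.Perm ℕ) : Prop :=
  IsLace n e w ∧ diagLength n w = codim n (rank e w)

/-- The longest element of `S m` (0-indexed), as a permutation of ℕ. -/
def longest (m : ℕ) : Equiv.Perm ℕ where
  toFun i := if i < m then m - 1 - i else i
  invFun i := if i < m then m - 1 - i else i
  left_inv i := by dsimp only; split_ifs <;> omega
  right_inv i := by dsimp only; split_ifs <;> omega

/-- Interchanging the x-variables `x (i+1)` and `x (i+2)` (0-indexed: `inl i`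
and `inl (i+1)`). -/
noncomputable def sX (i : ℕ) (f : MvPolynomial (ℕ ⊕ ℕ) ℤ) : MvPolynomial (ℕ ⊕ ℕ) ℤ :=
  rename (Sum.map (Equiv.swap i (i + 1)) id) f

/-- `S` is the family of double Schubert polynomials `S w = 𝔖_w(x; y)`:
it takes the prescribed product value on each longest element, it satisfies the
divided difference recursion `(x i - x (i+1)) * S (w * s i) = S w - (S w)^{s i}`
when `w` has a descent at `i` and `(S w)^{s i} = S w` otherwise, and only the
variables up to the last descents of `w` and `w⁻¹` occur in `S w`. -/
def IsSchubertFamily (S : Equiv.Perm ℕ → MvPolynomial (ℕ ⊕ ℕ) ℤ) : Prop :=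
  (∀ m : ℕ, S (longest m) =
      ∏ i ∈ Finset.range m, ∏ j ∈ Finset.range m,
        if i + j + 2 ≤ m then X (Sum.inl i) - X (Sum.inr j) else 1) ∧
  (∀ w : Equiv.Perm ℕ, FinSupp w → ∀ i : ℕ,
    (w (i + 1) < w i →
      (X (Sum.inl i) - X (Sum.inl (i + 1))) * S (w * Equiv.swap i (i + 1)) =
        S w - sX i (S w)) ∧
    (w i < w (i + 1) → sX i (S w) = S w)) ∧
  (∀ w : Equiv.Perm ℕ, FinSupp w → ∀ k l : ℕ,
    (∀ t, k ≤ t → ¬w (t + 1) < w t) → (∀ t, l ≤ t → ¬w⁻¹ (t + 1) < w⁻¹ t) →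
    ∀ v ∈ (S w).vars, (∃ a < k, v = Sum.inl a) ∨ (∃ b < l, v = Sum.inr b))

/-- The product `S(w) = 𝔖_{w 1}(x^1;x^0) ⋯ 𝔖_{w n}(x^n;x^{n-1})`, in the
variables `(i, j) = x^i_{j+1}`. -/
noncomputable def Sprod (n : ℕ) (S : Equiv.Perm ℕ → MvPolynomial (ℕ ⊕ ℕ) ℤ)
    (w : ℕ → Equiv.Perm ℕ) : MvPolynomial (ℕ × ℕ) ℤ :=
  ∏ i ∈ Finset.Icc 1 n,
    rename (Sum.elim (fun a => (i, a)) (fun b => (i - 1, b))) (S (w i))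

/-- The component-formula polynomial `Q_r`: the sum of `Sprod n S w` over all
minimal lace diagrams `w` with rank conditions `r`. -/
noncomputable def Qpoly (n : ℕ) (e : ℕ → ℕ) (r : ℕ → ℕ → ℕ)
    (S : Equiv.Perm ℕ → MvPolynomial (ℕ ⊕ ℕ) ℤ) : MvPolynomial (ℕ × ℕ) ℤ :=
  ∑ᶠ (w : ℕ → Equiv.Perm ℕ) (_ : IsMinimal n e w ∧ RankEq n e w r), Sprod n S w

/-- The shifted permutation `1^k × w`: fixes `0, …, k-1` (0-indexed) and sends
`k + j` to `k + w j`. -/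
def shiftPerm (k : ℕ) (w : Equiv.Perm ℕ) : Equiv.Perm ℕ where
  toFun j := if j < k then j else w (j - k) + k
  invFun j := if j < k then j else w⁻¹ (j - k) + k
  left_inv j := by
    dsimp only
    by_cases h : j < k
    · simp [h]
    · have h1 : ¬ w (j - k) + k < k := by omega
      simp only [if_neg h, if_neg h1, Nat.add_sub_cancel, Equiv.Perm.inv_def, Equiv.symm_apply_apply]
      omega
  right_inv j := by
    dsimp only
    by_cases h : j < k
    · simp [h]
    · have h1 : ¬ w⁻¹ (j - k) + k < k := by omega
      have h2 : w (w⁻¹ (j - k)) = j - k := w.apply_symm_apply _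
      simp only [if_neg h, if_neg h1, Nat.add_sub_cancel, h2]
      omega

/-- The lace diagram `(1^k × w 1, …, 1^k × w n)`. -/
def shiftDiag (k : ℕ) (w : ℕ → Equiv.Perm ℕ) : ℕ → Equiv.Perm ℕ :=
  fun i => shiftPerm k (w i)

/-- The transformation of lace diagrams, allowed at `(i, j)` (0-indexed `j`,
so `j + 1 < e i`) when exactly one of the two descent conditions holds; it
replaces `w i` by `w i * s j` and `w (i+1)` by `s j * w (i+1)`. -/
def TransStep (n : ℕ) (e : ℕ → ℕ) (w w' : ℕ → Equiv.Perm ℕ) : Prop :=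
  IsLace n e w ∧ ∃ i j, 1 ≤ i ∧ i + 1 ≤ n ∧ j + 1 < e i ∧
    Xor' (w i (j + 1) < w i j) ((w (i + 1))⁻¹ (j + 1) < (w (i + 1))⁻¹ j) ∧
    w' = Function.update (Function.update w i (w i * Equiv.swap j (j + 1))) (i + 1)
          (Equiv.swap j (j + 1) * w (i + 1))

/-- The column where the strand through dot `q` of column `c` starts. -/
def startCol (e : ℕ → ℕ) (w : ℕ → Equiv.Perm ℕ) : ℕ → ℕ → ℕ
  | 0, _ => 0
  | c + 1, q => if w (c + 1) q < e c then startCol e w c (w (c + 1) q) else c + 1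

/-- The starting dot `(column, position)` of the strand through dot `q` of column `c`. -/
def startDot (e : ℕ → ℕ) (w : ℕ → Equiv.Perm ℕ) : ℕ → ℕ → ℕ × ℕ
  | 0, q => (0, q)
  | c + 1, q => if w (c + 1) q < e c then startDot e w c (w (c + 1) q) else (c + 1, q)

def endColAux (e : ℕ → ℕ) (w : ℕ → Equiv.Perm ℕ) : ℕ → ℕ → ℕ → ℕ
  | 0, c, _ => c
  | f + 1, c, q =>
      if (w (c + 1))⁻¹ q < e (c + 1) then endColAux e w f (c + 1) ((w (c + 1))⁻¹ q) else c

/-- The column where the strand through dot `q` of column `c` terminates. -/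
def endCol (n : ℕ) (e : ℕ → ℕ) (w : ℕ → Equiv.Perm ℕ) (c q : ℕ) : ℕ :=
  endColAux e w (n - c) c q

/-- `w` is the left-most lace diagram (for its rank conditions): it is a lace
diagram such that in every column the strands are sorted from top to bottom by
starting column (ascending) and then by terminating column (descending), exactly
as produced by the construction which adds, for `i = 0, …, n` and `j = n, …, i`,
all strands from column `i` to column `j` to the bottom of the diagram; and
strands with the same start and end do not cross. -/
def IsLeftmost (n : ℕ) (e : ℕ → ℕ) (w : ℕ → Equiv.Perm ℕ) : Prop :=
  IsLace n e w ∧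
  (∀ c, c ≤ n → ∀ q q', q < q' → q' < e c →
    startCol e w c q < startCol e w c q' ∨
      (startCol e w c q = startCol e w c q' ∧ endCol n e w c q' ≤ endCol n e w c q)) ∧
  (∀ c, 1 ≤ c → c ≤ n → ∀ q q', q < q' → q' < e c →
    startCol e w c q = startCol e w c q' → endCol n e w c q = endCol n e w c q' →
    w c q < w c q')

/-- The substitution homomorphism `φ_u` of a lace diagram `u`: it sends the
variable `x^i_j` to the variable `b_S` of the strand `S` of `u` through dot
`(i, j)`, where the strand variables are realized as the variables indexed by
the starting dots of strands. -/
noncomputable def phiMap (e : ℕ → ℕ) (u : ℕ → Equiv.Perm ℕ) :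
    MvPolynomial (ℕ × ℕ) ℤ →ₐ[ℤ] MvPolynomial (ℕ × ℕ) ℤ :=
  rename fun p => startDot e u p.1 p.2

/-- The product of the simple transpositions `s (i+1)` (1-indexed) for `i` in `l`. -/
def wordProd (l : List ℕ) : Equiv.Perm ℕ := (l.map fun i => Equiv.swap i (i + 1)).prod

/-- A reduced word for a finitely supported permutation of ℕ. -/
def IsReducedWord (u : Equiv.Perm ℕ) (l : List ℕ) : Prop :=
  wordProd l = u ∧ l.length = ell u

/-- Bruhat order: some reduced word for `u` contains a subword which is a
reduced word for `w`. -/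
def BruhatLE (w u : Equiv.Perm ℕ) : Prop :=
  ∃ l l', IsReducedWord u l ∧ IsReducedWord w l' ∧ l'.Sublist l

/-!
The theorem reduces, one factor of `S(w)` at a time, to the vanishing property of double
Schubert polynomials at torus-fixed points: write `𝔖_w(u)` for `𝔖_w(x; y)` with `x_a`
specialised to `y_{u(a)}`; then `𝔖_w(u) ≠ 0` implies `w ≤ u`. Indeed `φ_u` sends `x^i_a` to the
variable of the strand through `(i, a)`, which is also the strand through its neighbour
`(i - 1, u_i(a))` whenever that dot exists, so `φ_u(𝔖_{w_i}(x^i; x^{i-1}))` is a renaming of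
`𝔖_{w_i}(u_i)`.

The vanishing property is proved by induction on `ℓ(u)`, splitting off a descent `s_i` of `u`
with the divided difference recursion. Its base case `𝔖_w(1) = 0` for `w ≠ 1` comes from a
downward induction from the longest element `w₀` of some `S_m`, which shows `𝔖_w(u) = 0`
whenever `ℓ(u) < ℓ(w)`; for `w₀` itself, `𝔖_{w₀}(u)` is a product of differences `y_{u(i)} - y_j`
which has a zero factor unless every row of the Lehmer code of `u` is as long as that of `w₀`.
-/

abbrev simple (i : ℕ) : Equiv.Perm ℕ := Equiv.swap i (i + 1)

def Inversions (w : Equiv.Perm ℕ) : Set (ℕ × ℕ) := {p | p.1 < p.2 ∧ w p.2 < w p.1}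

theorem ell_eq_ncard_inversions (w : Equiv.Perm ℕ) : ell w = (Inversions w).ncard := rfl

def IsSupportedBelow (w : Equiv.Perm ℕ) (m : ℕ) : Prop := ∀ x, m ≤ x → w x = x

theorem finSupp_iff_exists_isSupportedBelow {w : Equiv.Perm ℕ} :
    FinSupp w ↔ ∃ m, IsSupportedBelow w m := by
  constructor
  · rintro h
    obtain ⟨m, hm⟩ := h.bddAbove
    exact ⟨m + 1, fun x hx => by_contra fun hc => absurd (hm hc) (by omega)⟩
  · rintro ⟨m, hm⟩
    exact (Set.finite_Iio m).subset fun x hx => by_contra fun hc => hx (hm x (not_lt.mp hc))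

namespace IsSupportedBelow

variable {w v : Equiv.Perm ℕ} {m : ℕ}

theorem finSupp (h : IsSupportedBelow w m) : FinSupp w :=
  finSupp_iff_exists_isSupportedBelow.mpr ⟨m, h⟩

theorem apply_lt (h : IsSupportedBelow w m) {x : ℕ} (hx : x < m) : w x < m := by
  by_contra! hc
  have := w.injective (h _ hc)
  omega

theorem mono (h : IsSupportedBelow w m) {m' : ℕ} (hm : m ≤ m') : IsSupportedBelow w m' :=
  fun x hx => h x (hm.trans hx)

theorem mul (hw : IsSupportedBelow w m) (hv : IsSupportedBelow v m) :
    IsSupportedBelow (w * v) m := fun x hx => by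
  rw [Equiv.Perm.mul_apply, hv x hx, hw x hx]

theorem inversions_subset (h : IsSupportedBelow w m) :
    Inversions w ⊆ {p | p.1 < p.2 ∧ p.2 < m} := by
  rintro ⟨a, b⟩ ⟨hab, hinv⟩
  refine ⟨hab, ?_⟩
  by_contra! hb
  dsimp only at hab hinv hb
  rw [h b hb] at hinv
  rcases lt_or_ge a m with ha | ha
  · have := h.apply_lt ha; omega
  · rw [h a ha] at hinv; omega

end IsSupportedBelow

theorem isSupportedBelow_simple {i m : ℕ} (h : i + 1 < m) : IsSupportedBelow (simple i) m :=
  fun _ _ => Equiv.swap_apply_of_ne_of_ne (by omega) (by omega)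

theorem finSupp_one : FinSupp 1 := IsSupportedBelow.finSupp (m := 0) fun _ _ => rfl

theorem FinSupp.mul_simple {w : Equiv.Perm ℕ} (hw : FinSupp w) (i : ℕ) :
    FinSupp (w * simple i) := by
  obtain ⟨m, hm⟩ := finSupp_iff_exists_isSupportedBelow.mp hw
  exact ((hm.mono (le_max_left m (i + 2))).mul (isSupportedBelow_simple (by omega))).finSupp

theorem FinSupp.inversions_finite {w : Equiv.Perm ℕ} (hw : FinSupp w) :
    (Inversions w).Finite := by
  obtain ⟨m, hm⟩ := finSupp_iff_exists_isSupportedBelow.mp hw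
  exact ((Set.finite_Iio m).prod (Set.finite_Iio m)).subset fun p hp =>
    have h := hm.inversions_subset hp
    ⟨h.1.trans h.2, h.2⟩

theorem ell_one : ell 1 = 0 := by
  rw [ell]
  convert Set.ncard_empty (ℕ × ℕ) using 2
  exact Set.eq_empty_of_forall_notMem fun p hp => absurd (hp.1.trans hp.2) (lt_irrefl _)

theorem eq_one_of_forall_not_lt {w : Equiv.Perm ℕ} (h : ∀ i, ¬ w (i + 1) < w i) : w = 1 := by
  have hmono : StrictMono w := strictMono_nat_of_lt_succ fun i =>
    lt_of_le_of_ne (not_lt.mp (h i)) (w.injective.ne (by omega))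
  have := Subsingleton.elim (hmono.orderIsoOfSurjective w w.surjective) (OrderIso.refl ℕ)
  ext x
  exact congrArg (· x) this

theorem exists_descent_of_ne_one {w : Equiv.Perm ℕ} (h : w ≠ 1) : ∃ i, w (i + 1) < w i := by
  by_contra! hc
  exact h (eq_one_of_forall_not_lt fun i => not_lt.mpr (hc i))

theorem eq_one_of_ell_eq_zero {w : Equiv.Perm ℕ} (hw : FinSupp w) (h : ell w = 0) : w = 1 := by
  have hempty := (Set.ncard_eq_zero hw.inversions_finite).mp h
  refine eq_one_of_forall_not_lt fun i hi => ?_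
  exact (Set.eq_empty_iff_forall_notMem.mp hempty) (i, i + 1) ⟨by simp, hi⟩

theorem simple_apply_lt_simple_apply {i a b : ℕ} (hab : a < b) (hne : (a, b) ≠ (i, i + 1)) :
    simple i a < simple i b := by
  simp only [ne_eq, Prod.mk.injEq] at hne
  simp only [Equiv.swap_apply_def]
  split_ifs <;> omega

theorem inversions_mul_simple_diff (w : Equiv.Perm ℕ) (i : ℕ) :
    Inversions (w * simple i) \ {(i, i + 1)} =
      Equiv.prodCongr (simple i) (simple i) '' (Inversions w \ {(i, i + 1)}) := by
  rw [Equiv.image_eq_preimage_symm]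
  ext ⟨a, b⟩
  simp only [Inversions, Set.mem_sdiff, Set.mem_ofPred_eq, Set.mem_singleton_iff, Set.mem_preimage,
    Equiv.prodCongr_symm, Equiv.prodCongr_apply, Prod.map, Equiv.symm_swap, Equiv.Perm.mul_apply]
  constructor
  · rintro ⟨⟨hab, hinv⟩, hne⟩
    refine ⟨⟨simple_apply_lt_simple_apply hab hne, hinv⟩, fun h => ?_⟩
    rw [Prod.mk.injEq, Equiv.swap_apply_eq_iff, Equiv.swap_apply_eq_iff, Equiv.swap_apply_left,
      Equiv.swap_apply_right] at h
    omega
  · rintro ⟨⟨hab, hinv⟩, hne⟩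
    have hab' := simple_apply_lt_simple_apply hab hne
    rw [Equiv.swap_apply_self, Equiv.swap_apply_self] at hab'
    refine ⟨⟨hab', hinv⟩, fun h => ?_⟩
    rw [Prod.mk.injEq] at h
    rw [h.1, h.2, Equiv.swap_apply_left, Equiv.swap_apply_right] at hab
    omega

theorem ell_mul_simple_of_lt {w : Equiv.Perm ℕ} (hw : FinSupp w) {i : ℕ} (h : w i < w (i + 1)) :
    ell (w * simple i) = ell w + 1 := by
  have hmem : (i, i + 1) ∈ Inversions (w * simple i) := by
    simpa [Inversions] using h
  have hnmem : (i, i + 1) ∉ Inversions w := fun hc => absurd hc.2 (by dsimp only; omega)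
  rw [ell_eq_ncard_inversions,
    ← Set.ncard_sdiff_singleton_add_one hmem (hw.mul_simple i).inversions_finite,
    inversions_mul_simple_diff, Set.ncard_image_of_injective _ (Equiv.injective _),
    Set.sdiff_singleton_eq_self hnmem, ell_eq_ncard_inversions]

theorem ell_mul_simple_of_gt {w : Equiv.Perm ℕ} (hw : FinSupp w) {i : ℕ} (h : w (i + 1) < w i) :
    ell w = ell (w * simple i) + 1 := by
  simpa [mul_assoc] using ell_mul_simple_of_lt (hw.mul_simple i) (i := i) (by simpa using h)

theorem ell_mul_simple_le {w : Equiv.Perm ℕ} (hw : FinSupp w) (i : ℕ) :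
    ell (w * simple i) ≤ ell w + 1 := by
  rcases lt_or_gt_of_ne (w.injective.ne (show i ≠ i + 1 by omega)) with h | h
  · exact (ell_mul_simple_of_lt hw h).le
  · have := ell_mul_simple_of_gt hw h; omega

theorem longest_apply (m i : ℕ) : longest m i = if i < m then m - 1 - i else i := rfl

theorem isSupportedBelow_longest (m : ℕ) : IsSupportedBelow (longest m) m := fun x hx => by
  simp [longest_apply, not_lt.mpr hx]

theorem longest_mul_self (m : ℕ) : longest m * longest m = 1 := by
  ext x
  simp only [Equiv.Perm.mul_apply, longest_apply, Equiv.Perm.one_apply]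
  split_ifs <;> omega

theorem inversions_longest (m : ℕ) : Inversions (longest m) = {p | p.1 < p.2 ∧ p.2 < m} := by
  refine (isSupportedBelow_longest m).inversions_subset.antisymm fun p ⟨hab, hb⟩ => ⟨hab, ?_⟩
  simp only [longest_apply, if_pos hb, if_pos (hab.trans hb)]
  omega

theorem ell_le_ell_longest {w : Equiv.Perm ℕ} {m : ℕ} (hw : IsSupportedBelow w m) :
    ell w ≤ ell (longest m) :=
  Set.ncard_le_ncard (hw.inversions_subset.trans_eq (inversions_longest m).symm)
    (isSupportedBelow_longest m).finSupp.inversions_finite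

/-- If `w` had no ascent below `m - 1`, then `w * longest m` would have no descent at all. -/
theorem exists_ascent_of_ne_longest {w : Equiv.Perm ℕ} {m : ℕ} (hw : IsSupportedBelow w m)
    (hne : w ≠ longest m) : ∃ i, i + 1 < m ∧ w i < w (i + 1) := by
  by_contra! hc
  refine hne (mul_right_cancel (b := longest m) ?_)
  rw [longest_mul_self]
  refine eq_one_of_forall_not_lt fun i => ?_
  simp only [Equiv.Perm.mul_apply, longest_apply]
  split_ifs with h1 h2 h2
  · have := hc (m - 1 - (i + 1)) (by omega)
    rw [show m - 1 - (i + 1) + 1 = m - 1 - i by omega] at this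
    exact not_lt.mpr this
  · omega
  · have := hw.apply_lt (show m - 1 - i < m by omega)
    rw [hw (i + 1) (by omega)]
    omega
  · rw [hw i (by omega), hw (i + 1) (by omega)]
    omega

def lehmerRow (u : Equiv.Perm ℕ) (M i : ℕ) : Finset ℕ := (Finset.Ioo i M).filter (u · < u i)

theorem sum_card_lehmerRow_le_ell {u : Equiv.Perm ℕ} (hu : FinSupp u) (m M : ℕ) :
    ∑ i ∈ Finset.range m, (lehmerRow u M i).card ≤ ell u := by
  rw [← Finset.card_sigma, ← Set.ncard_coe_finset]
  refine Set.ncard_le_ncard_of_injOn (fun p => (p.1, p.2)) (fun p hp => ?_) ?_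
    hu.inversions_finite
  · simp only [Finset.coe_sigma, Set.mem_sigma_iff, Finset.mem_coe, lehmerRow, Finset.mem_filter,
      Finset.mem_Ioo] at hp
    exact ⟨hp.2.1.1, hp.2.2⟩
  · rintro ⟨i, t⟩ - ⟨i', t'⟩ - h
    simp only [Prod.mk.injEq] at h
    obtain ⟨rfl, rfl⟩ := h
    rfl

theorem ell_longest_le_sum (m : ℕ) : ell (longest m) ≤ ∑ i ∈ Finset.range m, (m - 1 - i) := by
  have hrow : ∀ i ∈ Finset.range m, m - 1 - i = (Finset.Ioo i m).card := fun i _ => by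
    rw [Nat.card_Ioo]; omega
  rw [Finset.sum_congr rfl hrow, ← Finset.card_sigma, ← Set.ncard_coe_finset,
    ell_eq_ncard_inversions, inversions_longest]
  refine (Set.ncard_le_ncard ?_ (Set.toFinite _)).trans
    (Set.ncard_image_le (f := fun p => (p.1, p.2)) (Finset.finite_toSet _))
  rintro ⟨a, b⟩ ⟨hab, hb⟩
  exact ⟨⟨a, b⟩, by simp only [Finset.coe_sigma, Set.mem_sigma_iff, Finset.mem_coe,
    Finset.mem_range, Finset.mem_Ioo]; omega, rfl⟩

/-- Of the `u i` positions with values below `u i`, those left of `i` lie in `[m - u i, i)`. -/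
theorem sub_le_card_lehmerRow {u : Equiv.Perm ℕ} {m M i : ℕ} (hu : IsSupportedBelow u M)
    (hmM : m ≤ M) (H : ∀ t, t + 2 ≤ m → m ≤ u t + t + 1) (hi : i + 2 ≤ m) :
    m - 1 - i ≤ (lehmerRow u M i).card := by
  have hsub : Finset.range (u i) ⊆ (Finset.Ico (m - u i) i ∪ lehmerRow u M i).image u := by
    intro v hv
    rw [Finset.mem_range] at hv
    refine Finset.mem_image.mpr ⟨u⁻¹ v, ?_, u.apply_symm_apply v⟩
    have hv' : u (u⁻¹ v) = v := u.apply_symm_apply v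
    have huiM := hu.apply_lt (show i < M by omega)
    simp only [Finset.mem_union, Finset.mem_Ico, lehmerRow, Finset.mem_filter, Finset.mem_Ioo]
    rcases lt_trichotomy (u⁻¹ v) i with h | h | h
    · have := H (u⁻¹ v) (by omega)
      omega
    · rw [h] at hv'; omega
    · refine Or.inr ⟨⟨h, by_contra fun hM => ?_⟩, by omega⟩
      rw [hu _ (not_lt.mp hM)] at hv'
      omega
  have := (Finset.card_le_card hsub).trans (Finset.card_image_le.trans (Finset.card_union_le _ _))
  rw [Finset.card_range, Nat.card_Ico] at this
  have := H i hi
  omega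

theorem ell_longest_le {u : Equiv.Perm ℕ} (hu : FinSupp u) {m : ℕ}
    (H : ∀ i, i + 2 ≤ m → m ≤ u i + i + 1) : ell (longest m) ≤ ell u := by
  obtain ⟨M, hM⟩ := finSupp_iff_exists_isSupportedBelow.mp hu
  refine (ell_longest_le_sum m).trans (le_trans ?_ (sum_card_lehmerRow_le_ell hu m (max M m)))
  refine Finset.sum_le_sum fun i hi => ?_
  rcases le_or_gt (i + 2) m with h | h
  · exact sub_le_card_lehmerRow (hM.mono le_sup_left) le_sup_right H h
  · omega

theorem wordProd_append_singleton (l : List ℕ) (i : ℕ) :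
    wordProd (l ++ [i]) = wordProd l * simple i := by
  simp [wordProd]

theorem IsReducedWord.append_singleton {u : Equiv.Perm ℕ} (hu : FinSupp u) {i : ℕ}
    (hd : u (i + 1) < u i) {l : List ℕ} (hl : IsReducedWord (u * simple i) l) :
    IsReducedWord u (l ++ [i]) := by
  refine ⟨by rw [wordProd_append_singleton, hl.1, mul_assoc, Equiv.swap_mul_self, mul_one], ?_⟩
  rw [List.length_append, hl.2, ell_mul_simple_of_gt hu hd, List.length_singleton]

theorem bruhatLE_of_bruhatLE_mul_simple {u w : Equiv.Perm ℕ} (hu : FinSupp u) {i : ℕ}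
    (hd : u (i + 1) < u i) (h : BruhatLE w (u * simple i)) : BruhatLE w u := by
  obtain ⟨l, l', hl, hl', hsub⟩ := h
  exact ⟨l ++ [i], l', hl.append_singleton hu hd, hl', hsub.trans (List.sublist_append_left l _)⟩

theorem bruhatLE_of_mul_simple {u w : Equiv.Perm ℕ} (hu : FinSupp u) (hw : FinSupp w) {i : ℕ}
    (hdu : u (i + 1) < u i) (hdw : w (i + 1) < w i)
    (h : BruhatLE (w * simple i) (u * simple i)) : BruhatLE w u := by
  obtain ⟨l, l', hl, hl', hsub⟩ := h
  exact ⟨l ++ [i], l' ++ [i], hl.append_singleton hu hdu, hl'.append_singleton hw hdw,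
    hsub.append (List.Sublist.refl _)⟩

/-- The restriction of a double Schubert polynomial to the torus-fixed point `u`. -/
noncomputable def permSubst (u : Equiv.Perm ℕ) :
    MvPolynomial (ℕ ⊕ ℕ) ℤ →ₐ[ℤ] MvPolynomial ℕ ℤ :=
  rename (Sum.elim u id)

theorem permSubst_sX (u : Equiv.Perm ℕ) (i : ℕ) (f : MvPolynomial (ℕ ⊕ ℕ) ℤ) :
    permSubst u (sX i f) = permSubst (u * simple i) f := by
  have : Sum.elim u id ∘ Sum.map (simple i) id = Sum.elim (u * simple i) id := by
    funext x
    rcases x with a | b <;> rfl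
  rw [permSubst, permSubst, sX, rename_rename, this]

namespace IsSchubertFamily

variable {S : Equiv.Perm ℕ → MvPolynomial (ℕ ⊕ ℕ) ℤ}

theorem permSubst_mul_simple (hS : IsSchubertFamily S) {w : Equiv.Perm ℕ} (hw : FinSupp w)
    {i : ℕ} (hd : w (i + 1) < w i) (v : Equiv.Perm ℕ) :
    (X (v i) - X (v (i + 1))) * permSubst v (S (w * simple i)) =
      permSubst v (S w) - permSubst (v * simple i) (S w) := by
  have := congrArg (permSubst v) ((hS.2.1 w hw i).1 hd)
  rwa [map_mul, map_sub, map_sub, permSubst_sX, permSubst, rename_X, rename_X] at this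

theorem permSubst_longest_eq_zero (hS : IsSchubertFamily S) {u : Equiv.Perm ℕ} (hu : FinSupp u)
    {m : ℕ} (h : ell u < ell (longest m)) : permSubst u (S (longest m)) = 0 := by
  obtain ⟨i, hi, hui⟩ : ∃ i, i + 2 ≤ m ∧ u i + i + 1 < m := by
    by_contra! hc
    exact (ell_longest_le hu hc).not_gt h
  rw [hS.1 m, map_prod]
  refine Finset.prod_eq_zero (Finset.mem_range.mpr (show i < m by omega)) ?_
  rw [map_prod]
  -- the factor `x_i - y_{u i}` becomes `y_{u i} - y_{u i}`
  refine Finset.prod_eq_zero (Finset.mem_range.mpr (show u i < m by omega)) ?_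
  rw [if_pos (by omega), map_sub, permSubst, rename_X, rename_X]
  exact sub_self _

theorem permSubst_eq_zero_of_ell_lt (hS : IsSchubertFamily S) {m : ℕ} {w : Equiv.Perm ℕ}
    (hw : IsSupportedBelow w m) {u : Equiv.Perm ℕ} (hu : FinSupp u) (h : ell u < ell w) :
    permSubst u (S w) = 0 := by
  induction hN : ell (longest m) - ell w using Nat.strong_induction_on generalizing w u with
  | _ N ih =>
    obtain rfl | hne := eq_or_ne w (longest m)
    · exact hS.permSubst_longest_eq_zero hu h
    obtain ⟨i, hi, hasc⟩ := exists_ascent_of_ne_longest hw hne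
    have hw' : IsSupportedBelow (w * simple i) m := hw.mul (isSupportedBelow_simple hi)
    have hlen := ell_mul_simple_of_lt hw.finSupp hasc
    have hmax := ell_le_ell_longest hw'
    have hd : (w * simple i) (i + 1) < (w * simple i) i := by simpa using hasc
    have h₁ : permSubst u (S (w * simple i)) = 0 := ih _ (by omega) hw' hu (by omega) rfl
    have h₂ : permSubst (u * simple i) (S (w * simple i)) = 0 :=
      ih _ (by omega) hw' (hu.mul_simple i) (by have := ell_mul_simple_le hu i; omega) rfl
    have key := hS.permSubst_mul_simple hw'.finSupp hd u
    rw [mul_assoc, Equiv.swap_mul_self, mul_one, h₁, h₂, sub_zero] at key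
    have hX : (X (u i) - X (u (i + 1)) : MvPolynomial ℕ ℤ) ≠ 0 :=
      sub_ne_zero.mpr (X_injective.ne (u.injective.ne (by omega)))
    exact (mul_eq_zero.mp key).resolve_left hX

theorem bruhatLE_of_permSubst_ne_zero (hS : IsSchubertFamily S) {u w : Equiv.Perm ℕ}
    (hu : FinSupp u) (hw : FinSupp w) (h : permSubst u (S w) ≠ 0) : BruhatLE w u := by
  induction hN : ell u generalizing u w with
  | zero =>
    obtain rfl := eq_one_of_ell_eq_zero hu hN
    obtain ⟨m, hm⟩ := finSupp_iff_exists_isSupportedBelow.mp hw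
    obtain rfl : w = 1 := eq_one_of_ell_eq_zero hw (by
      by_contra hw0
      exact h (hS.permSubst_eq_zero_of_ell_lt hm finSupp_one (by rw [ell_one]; omega)))
    exact ⟨[], [], ⟨rfl, ell_one.symm⟩, ⟨rfl, ell_one.symm⟩, List.Sublist.slnil⟩
  | succ N ih =>
    obtain ⟨i, hdu⟩ := exists_descent_of_ne_one (w := u) (by rintro rfl; simp [ell_one] at hN)
    have hlen := ell_mul_simple_of_gt hu hdu
    have ih' := fun {w} hw hne => ih (hu.mul_simple i) (w := w) hw hne (by omega)
    rcases lt_or_gt_of_ne (w.injective.ne (show i ≠ i + 1 by omega)) with hw_asc | hw_desc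
    · refine bruhatLE_of_bruhatLE_mul_simple hu hdu (ih' hw ?_)
      rwa [← permSubst_sX, (hS.2.1 w hw i).2 hw_asc]
    · -- `𝔖_w(u) = 𝔖_w(u s_i) - (y_{u(i+1)} - y_{u(i)}) 𝔖_{w s_i}(u s_i)`
      have key := hS.permSubst_mul_simple hw hw_desc (u * simple i)
      rw [mul_assoc, Equiv.swap_mul_self, mul_one] at key
      by_cases h0 : permSubst (u * simple i) (S w) = 0
      · refine bruhatLE_of_mul_simple hu hw hdu hw_desc (ih' (hw.mul_simple i) fun h1 => h ?_)
        rw [h0, h1, mul_zero] at key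
        simpa using key.symm
      · exact bruhatLE_of_bruhatLE_mul_simple hu hdu (ih' hw h0)

theorem lt_of_inr_mem_vars (hS : IsSchubertFamily S) {w : Equiv.Perm ℕ} (hw : FinSupp w) {l : ℕ}
    (hinv : ∀ t, w⁻¹ (t + 1) < w⁻¹ t → t < l) {b : ℕ} (hb : Sum.inr b ∈ (S w).vars) : b < l := by
  obtain ⟨k, hk⟩ := finSupp_iff_exists_isSupportedBelow.mp hw
  have hdesc : ∀ t, k ≤ t → ¬ w (t + 1) < w t := fun t ht => by
    rw [hk t ht, hk (t + 1) (by omega)]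
    omega
  rcases hS.2.2 w hw k l hdesc (fun t ht hd => absurd (hinv t hd) (by omega)) _ hb with
    ⟨_, -, h⟩ | ⟨_, hb', h⟩
  · cases h
  · cases h
    exact hb'

end IsSchubertFamily

theorem MvPolynomial.rename_eq_rename_of_forall_mem_vars {σ τ R : Type*} [CommSemiring R]
    {f g : σ → τ} {p : MvPolynomial σ R} (h : ∀ i ∈ p.vars, f i = g i) :
    rename f p = rename g p :=
  hom_congr_vars (f₁ := (rename f).toRingHom) (f₂ := (rename g).toRingHom) (by ext; simp)
    (fun i hi _ => by simp [h i hi]) rfl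

/-- The dot `(c + 1, a)` lies on the strand of its neighbour `(c, u (c + 1) a)` whenever that
dot exists. -/
theorem phiMap_rename_eq_rename_permSubst (e : ℕ → ℕ) (u : ℕ → Equiv.Perm ℕ) (c : ℕ)
    {p : MvPolynomial (ℕ ⊕ ℕ) ℤ} (hp : ∀ b, Sum.inr b ∈ p.vars → b < e c) :
    phiMap e u (rename (Sum.elim (fun a => (c + 1, a)) (fun b => (c + 1 - 1, b))) p) =
      rename (fun d => if d < e c then startDot e u c d else (c + 1, (u (c + 1))⁻¹ d))
        (permSubst (u (c + 1)) p) := by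
  rw [phiMap, permSubst, rename_rename, rename_rename]
  refine rename_eq_rename_of_forall_mem_vars fun v hv => ?_
  rcases v with a | b
  · by_cases hd : u (c + 1) a < e c <;> simp [startDot, hd]
  · simp [hp b hv]

theorem phi_ne_zero_bruhat_general (n : ℕ) (e : ℕ → ℕ)
    (u w : ℕ → Equiv.Perm ℕ) (hu : IsLace n e u) (hw : IsLace n e w)
    (S : Equiv.Perm ℕ → MvPolynomial (ℕ ⊕ ℕ) ℤ) (hS : IsSchubertFamily S)
    (h : phiMap e u (Sprod n S w) ≠ 0) :
    ∀ i, 1 ≤ i → i ≤ n → BruhatLE (w i) (u i) := by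
  intro i hi1 hi2
  obtain ⟨hwfin, -, hwinv⟩ := hw.2 i hi1 hi2
  have hufin := (hu.2 i hi1 hi2).1
  have hfactor : phiMap e u
      (rename (Sum.elim (fun a => (i, a)) (fun b => (i - 1, b))) (S (w i))) ≠ 0 := fun h0 =>
    h (by rw [Sprod, map_prod]; exact Finset.prod_eq_zero (Finset.mem_Icc.mpr ⟨hi1, hi2⟩) h0)
  obtain ⟨c, rfl⟩ : ∃ c, i = c + 1 := ⟨i - 1, by omega⟩
  rw [phiMap_rename_eq_rename_permSubst e u c fun _ => hS.lt_of_inr_mem_vars hwfin hwinv]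
    at hfactor
  exact hS.bruhatLE_of_permSubst_ne_zero hufin hwfin fun h0 => hfactor (by rw [h0, map_zero])

/-- if `u` is a lace diagram and `w` a sequence of finitely
supported permutations satisfying the descent bounds of a lace diagram, and
`φ_u(S(w)) ≠ 0`, then `w i ≤ u i` in the Bruhat order for every `i = 1, …, n`. -/
theorem phi_ne_zero_bruhat (n : ℕ) (hn : 1 ≤ n) (e : ℕ → ℕ)
    (u w : ℕ → Equiv.Perm ℕ) (hu : IsLace n e u) (hw : IsLace n e w)
    (S : Equiv.Perm ℕ → MvPolynomial (ℕ ⊕ ℕ) ℤ) (hS : IsSchubertFamily S)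
    (h : phiMap e u (Sprod n S w) ≠ 0) :
    ∀ i, 1 ≤ i → i ≤ n → BruhatLE (w i) (u i) :=
  phi_ne_zero_bruhat_general n e u w hu hw S hS h
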